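/- arXiv:2205.10310 — 9 statements merged into one kernel-verified Lean document; each statement's English description precedes it below -/
import Mathlib

section
/- Let π : ℝ × ℝ → ℝ be strictly decreasing in its first argument, let w > 0, and define the two linear pay schedules B0(h) = w·h and B1(h) = 1.5·w·h − 20·w. Suppose h0 ∈ [0,∞) maximizes h ↦ π(B0(h), h) over [0,∞) and h1 ∈ [0,∞) maximizes h ↦ π(B1(h), h) over [0,∞), and that each maximizer is unique. Then it is not the case that h0 ≤ 40 ≤ h1 with at least one of these two inequalities strict. -/
/-- The weak axiom of revealed preference rules out "straddling" in the wrong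
direction: if `h0` is the unique maximizer of profit under straight-time pay
`B0 h = w*h` and `h1` the unique maximizer under overtime-rate pay
`B1 h = 1.5*w*h - 20*w` (with profit `π` strictly decreasing in the wage cost),
then it cannot be that `h0 ≤ 40 ≤ h1` with at least one inequality strict. -/
theorem stmt1 (π : ℝ × ℝ → ℝ)
    (hdec : ∀ z z' h : ℝ, z < z' → π (z', h) < π (z, h))
    (w : ℝ) (hw : 0 < w)
    (B0 B1 : ℝ → ℝ) (hB0 : B0 = fun h => w * h)
    (hB1 : B1 = fun h => 1.5 * w * h - 20 * w)
    (h0 h1 : ℝ) (h0mem : h0 ∈ Set.Ici (0 : ℝ)) (h1mem : h1 ∈ Set.Ici (0 : ℝ))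
    (h0max : ∀ h ∈ Set.Ici (0 : ℝ), h ≠ h0 → π (B0 h, h) < π (B0 h0, h0))
    (h1max : ∀ h ∈ Set.Ici (0 : ℝ), h ≠ h1 → π (B1 h, h) < π (B1 h1, h1)) :
    ¬(h0 ≤ 40 ∧ 40 ≤ h1 ∧ (h0 < 40 ∨ 40 < h1)) := by
  rintro ⟨hle0, hle1, hstrict⟩
  subst hB0 hB1
  have hne : h0 ≠ h1 := by
    rintro rfl
    have : h0 = 40 := le_antisymm hle0 hle1
    subst this
    rcases hstrict with h | h <;> exact lt_irrefl _ h
  -- monotone (non-strict) consequence of hdec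
  have hmono : ∀ z z' h : ℝ, z ≤ z' → π (z', h) ≤ π (z, h) := by
    intro z z' h hzz
    rcases eq_or_lt_of_le hzz with rfl | hlt
    · exact le_refl _
    · exact (hdec z z' h hlt).le
  have hA : π ((fun h => w * h) h1, h1) < π ((fun h => w * h) h0, h0) :=
    h0max h1 h1mem (Ne.symm hne)
  have hB : π ((fun h => 1.5 * w * h - 20 * w) h0, h0)
      < π ((fun h => 1.5 * w * h - 20 * w) h1, h1) :=
    h1max h0 h0mem hne
  have hC : π ((fun h => 1.5 * w * h - 20 * w) h1, h1)
      ≤ π ((fun h => w * h) h1, h1) := by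
    apply hmono
    simp only
    nlinarith
  have hD : π ((fun h => w * h) h0, h0)
      ≤ π ((fun h => 1.5 * w * h - 20 * w) h0, h0) := by
    apply hmono
    simp only
    nlinarith
  linarith
end

section
/- Let h0 and h1 be real random variables on a probability space with h1 ≤ h0 almost surely, let k ∈ ℝ, and define h := min(h0, max(h1, k)). Then for every t < k, P(h ≤ t) = P(h0 ≤ t), and for every t ≥ k, P(h ≤ t) = P(h1 ≤ t). -/
open MeasureTheory

/-- Observables in the bunching design (Item 1 of the paper's Theorem 1, no
counterfactual bunchers): with `h1 ≤ h0` a.s. and observed hours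
`h = min(h0, max(h1, k))`, the CDF of `h` coincides with that of `h0` strictly
to the left of the kink `k` and with that of `h1` at and to the right of `k`. -/
theorem stmt2 {Ω : Type*} [MeasurableSpace Ω] (μ : Measure Ω)
    [IsProbabilityMeasure μ]
    (h0 h1 : Ω → ℝ) (hm0 : Measurable h0) (hm1 : Measurable h1)
    (hle : ∀ᵐ ω ∂μ, h1 ω ≤ h0 ω) (k : ℝ)
    (h : Ω → ℝ) (hdef : h = fun ω => min (h0 ω) (max (h1 ω) k)) :
    (∀ t < k, μ {ω | h ω ≤ t} = μ {ω | h0 ω ≤ t}) ∧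
    (∀ t, k ≤ t → μ {ω | h ω ≤ t} = μ {ω | h1 ω ≤ t}) := by
  subst hdef
  constructor
  · intro t ht
    congr 1
    ext ω
    simp only [Set.mem_setOf_eq, min_le_iff, le_max_iff]
    constructor
    · rintro (h | h)
      · exact h
      · exact absurd h (not_le.mpr (lt_of_lt_of_le ht (le_max_right _ _)))
    · exact Or.inl
  · intro t ht
    apply measure_congr
    filter_upwards [hle] with ω hω
    simp only [Set.mem_setOf_eq, min_le_iff, max_le_iff, eq_iff_iff]
    constructor
    · rintro (h | ⟨h, _⟩)
      · exact hω.trans h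
      · exact h
    · intro h
      exact Or.inr ⟨h, ht⟩
end

section
/- Let h0 and h1 be real random variables with h1 ≤ h0 almost surely, let k ∈ ℝ, and define h := min(h0, max(h1, k)). Then P(h = k) = P(h1 ≤ k) − P(h0 < k). In particular, if the CDF F0 of h0 is continuous at k, then P(h = k) = F1(k) − F0(k), where F1 is the CDF of h1. -/
open MeasureTheory ProbabilityTheory Set

/-!
Off a null set `h1 ≤ h0`, so `h1 ≤ k` holds exactly when either `h0 < k` or the agent bunches
(`h1 ≤ k ≤ h0`, i.e. `h = k`), and these two cases are disjoint; hence
`P(h1 ≤ k) = P(h = k) + P(h0 < k)`. Continuity of `F0` at `k` means `h0` has no atom at `k`,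
so then `P(h0 < k) = F0(k)`.
-/

lemma min_max_eq_iff {α : Type*} [LinearOrder α] {a b k : α} (hba : b ≤ a) :
    min a (max b k) = k ↔ b ≤ k ∧ k ≤ a := by
  constructor
  · intro h
    refine ⟨?_, h ▸ min_le_left _ _⟩
    by_contra! hkb
    rw [max_eq_left hkb.le, min_eq_right hba] at h
    exact hkb.ne' h
  · rintro ⟨hbk, hka⟩
    rw [max_eq_right hbk, min_eq_right hka]

lemma le_iff_min_max_eq_or_lt {α : Type*} [LinearOrder α] {a b k : α} (hba : b ≤ a) :
    b ≤ k ↔ min a (max b k) = k ∨ a < k := by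
  rw [min_max_eq_iff hba]
  constructor
  · intro hbk
    rcases lt_or_ge a k with hak | hka
    · exact Or.inr hak
    · exact Or.inl ⟨hbk, hka⟩
  · rintro (⟨hbk, -⟩ | hak)
    exacts [hbk, hba.trans hak.le]

lemma measureReal_min_max_eq {Ω : Type*} [MeasurableSpace Ω] {μ : Measure Ω} [IsFiniteMeasure μ]
    {h0 h1 : Ω → ℝ} (hm0 : Measurable h0) (hle : ∀ᵐ ω ∂μ, h1 ω ≤ h0 ω) (k : ℝ) :
    μ.real {ω | min (h0 ω) (max (h1 ω) k) = k}
      = μ.real {ω | h1 ω ≤ k} - μ.real {ω | h0 ω < k} := by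
  have hae : {ω | h1 ω ≤ k}
      =ᵐ[μ] ({ω | min (h0 ω) (max (h1 ω) k) = k} ∪ {ω | h0 ω < k} : Set Ω) := by
    filter_upwards [hle] with ω hω
    exact propext (le_iff_min_max_eq_or_lt hω)
  have hdisj : Disjoint {ω | min (h0 ω) (max (h1 ω) k) = k} {ω | h0 ω < k} :=
    disjoint_left.2 fun ω hK h0k => (h0k.trans_le (hK ▸ min_le_left _ _)).false
  rw [measureReal_congr hae, measureReal_union hdisj (hm0 measurableSet_Iio)]
  ring

lemma ProbabilityTheory.measureReal_Iio_eq_cdf (ν : Measure ℝ) [IsProbabilityMeasure ν] {k : ℝ}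
    (hc : ContinuousAt (cdf ν) k) : ν.real (Iio k) = cdf ν k := by
  have hIio := (cdf ν).measure_Iio (tendsto_cdf_atBot ν) k
  rw [measure_cdf, sub_zero, hc.continuousWithinAt.leftLim_eq] at hIio
  rw [measureReal_def, hIio, ENNReal.toReal_ofReal (cdf_nonneg ν k)]

lemma measureReal_lt_eq_le_of_continuousAt {Ω : Type*} [MeasurableSpace Ω] {μ : Measure Ω}
    [IsProbabilityMeasure μ] {X : Ω → ℝ} (hX : Measurable X) {k : ℝ}
    (hc : ContinuousAt (fun t => μ.real {ω | X ω ≤ t}) k) :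
    μ.real {ω | X ω < k} = μ.real {ω | X ω ≤ k} := by
  have : IsProbabilityMeasure (μ.map X) := Measure.isProbabilityMeasure_map hX.aemeasurable
  have hcdf : cdf (μ.map X) = fun t => μ.real {ω | X ω ≤ t} := by
    ext t
    rw [cdf_eq_real, map_measureReal_apply hX measurableSet_Iic]
    rfl
  rw [← hcdf] at hc
  have := measureReal_Iio_eq_cdf (μ.map X) hc
  rwa [map_measureReal_apply hX measurableSet_Iio, hcdf] at this

theorem stmt3_general {Ω : Type*} [MeasurableSpace Ω] (μ : Measure Ω)
    [IsProbabilityMeasure μ]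
    (h0 h1 : Ω → ℝ) (hm0 : Measurable h0)
    (hle : ∀ᵐ ω ∂μ, h1 ω ≤ h0 ω) (k : ℝ)
    (h : Ω → ℝ) (hdef : h = fun ω => min (h0 ω) (max (h1 ω) k))
    (F0 F1 : ℝ → ℝ)
    (hF0 : F0 = fun t => (μ {ω | h0 ω ≤ t}).toReal)
    (hF1 : F1 = fun t => (μ {ω | h1 ω ≤ t}).toReal) :
    (μ {ω | h ω = k}).toReal
      = (μ {ω | h1 ω ≤ k}).toReal - (μ {ω | h0 ω < k}).toReal ∧
    (ContinuousAt F0 k → (μ {ω | h ω = k}).toReal = F1 k - F0 k) := by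
  subst hdef hF0 hF1
  simp only [← measureReal_def]
  refine ⟨measureReal_min_max_eq hm0 hle k, fun hc => ?_⟩
  rw [measureReal_min_max_eq hm0 hle k, measureReal_lt_eq_le_of_continuousAt hm0 hc]

/-- The bunching probability (Equation bunchprob of the paper): with `h1 ≤ h0`
a.s. and observed hours `h = min(h0, max(h1, k))`, the mass at the kink is
`P(h = k) = P(h1 ≤ k) - P(h0 < k)`; if moreover the CDF `F0` of `h0` is
continuous at `k`, then `P(h = k) = F1(k) - F0(k)`. -/
theorem stmt3 {Ω : Type*} [MeasurableSpace Ω] (μ : Measure Ω)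
    [IsProbabilityMeasure μ]
    (h0 h1 : Ω → ℝ) (hm0 : Measurable h0) (hm1 : Measurable h1)
    (hle : ∀ᵐ ω ∂μ, h1 ω ≤ h0 ω) (k : ℝ)
    (h : Ω → ℝ) (hdef : h = fun ω => min (h0 ω) (max (h1 ω) k))
    (F0 F1 : ℝ → ℝ)
    (hF0 : F0 = fun t => (μ {ω | h0 ω ≤ t}).toReal)
    (hF1 : F1 = fun t => (μ {ω | h1 ω ≤ t}).toReal) :
    (μ {ω | h ω = k}).toReal
      = (μ {ω | h1 ω ≤ k}).toReal - (μ {ω | h0 ω < k}).toReal ∧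
    (ContinuousAt F0 k → (μ {ω | h ω = k}).toReal = F1 k - F0 k) :=
  stmt3_general μ h0 h1 hm0 hle k h hdef F0 F1 hF0 hF1
end

section
/- Let U be uniformly distributed on (0,1), let F0 and F1 be cumulative distribution functions with quantile functions Q0 and Q1, suppose Q1(u) ≤ Q0(u) for all u ∈ (0,1), and set h0 := Q0(U), h1 := Q1(U). Fix k ∈ ℝ and assume F0 and F1 are continuous at k. Then E[(h0 − h1)·1{h1 ≤ k ≤ h0}] = ∫_{F0(k)}^{F1(k)} (Q0(u) − Q1(u)) du. Consequently, if B := F1(k) − F0(k) > 0, then E[h0 − h1 | h1 ≤ k ≤ h0] = (1/B)·∫_{F0(k)}^{F1(k)} (Q0(u) − Q1(u)) du. -/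
open MeasureTheory

/-- A cumulative distribution function: monotone, right-continuous, with limits
0 at `-∞` and 1 at `+∞`. -/
def IsCDF (F : ℝ → ℝ) : Prop :=
  Monotone F ∧ (∀ x, ContinuousWithinAt F (Set.Ici x) x) ∧
    Filter.Tendsto F Filter.atBot (nhds 0) ∧ Filter.Tendsto F Filter.atTop (nhds 1)

/-- The quantile function of a CDF: `Q(u) = inf {x | F x ≥ u}`. -/
noncomputable def quantile (F : ℝ → ℝ) (u : ℝ) : ℝ := sInf {x | u ≤ F x}


open Set Filter

lemma cdf_nonneg {F : ℝ → ℝ} (hF : IsCDF F) (x : ℝ) : 0 ≤ F x :=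
  le_of_tendsto hF.2.2.1 (eventually_atBot.2 ⟨x, fun y hy => hF.1 hy⟩)

lemma cdf_le_one {F : ℝ → ℝ} (hF : IsCDF F) (x : ℝ) : F x ≤ 1 :=
  ge_of_tendsto hF.2.2.2 (eventually_atTop.2 ⟨x, fun y hy => hF.1 hy⟩)

lemma qset_nonempty {F : ℝ → ℝ} (hF : IsCDF F) {u : ℝ} (hu : u < 1) :
    {x | u ≤ F x}.Nonempty :=
  (hF.2.2.2.eventually (eventually_ge_nhds hu)).exists

lemma qset_bddBelow {F : ℝ → ℝ} (hF : IsCDF F) {u : ℝ} (hu : 0 < u) :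
    BddBelow {x | u ≤ F x} := by
  obtain ⟨b, hb⟩ := eventually_atBot.1 (hF.2.2.1.eventually (eventually_lt_nhds hu))
  exact ⟨b, fun x hx => le_of_not_gt fun h => absurd hx (not_le.2 (hb x h.le))⟩

lemma le_cdf_quantile {F : ℝ → ℝ} (hF : IsCDF F) {u : ℝ} (hu : u ∈ Ioo (0:ℝ) 1) :
    u ≤ F (quantile F u) := by
  have key : ∀ᶠ y in nhdsWithin (quantile F u) (Ioi (quantile F u)), u ≤ F y := by
    filter_upwards [eventually_mem_nhdsWithin] with y hy
    obtain ⟨t, ht, hty⟩ := (csInf_lt_iff (qset_bddBelow hF hu.1) (qset_nonempty hF hu.2)).1 hy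
    exact ht.trans (hF.1 hty.le)
  exact ge_of_tendsto ((hF.2.1 _).mono_left (nhdsWithin_mono _ Ioi_subset_Ici_self)) key

lemma quantile_le_iff {F : ℝ → ℝ} (hF : IsCDF F) {u : ℝ} (hu : u ∈ Ioo (0:ℝ) 1) {x : ℝ} :
    quantile F u ≤ x ↔ u ≤ F x := by
  constructor
  · intro h
    exact (le_cdf_quantile hF hu).trans (hF.1 h)
  · intro h
    exact csInf_le (qset_bddBelow hF hu.1) h

lemma le_cdf_of_quantile_lt {F : ℝ → ℝ} (hF : IsCDF F) {u : ℝ} (hu : u ∈ Ioo (0:ℝ) 1)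
    {k : ℝ} (h : quantile F u < k) : u ≤ F k := by
  obtain ⟨t, ht, htk⟩ := (csInf_lt_iff (qset_bddBelow hF hu.1) (qset_nonempty hF hu.2)).1 h
  exact ht.trans (hF.1 htk.le)

lemma quantile_lt_of_lt_cdf {F : ℝ → ℝ} (hF : IsCDF F) {u k : ℝ} (hu : 0 < u)
    (hc : ContinuousAt F k) (h : u < F k) : quantile F u < k := by
  have h1 : ∀ᶠ x in nhdsWithin k (Iio k), u < F x :=
    (hc.eventually (eventually_gt_nhds h)).filter_mono nhdsWithin_le_nhds
  obtain ⟨x, hux, hxk⟩ := (h1.and eventually_mem_nhdsWithin).exists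
  exact lt_of_le_of_lt (csInf_le (qset_bddBelow hF hu) hux.le) hxk

lemma quantile_monoOn {F : ℝ → ℝ} (hF : IsCDF F) :
    MonotoneOn (quantile F) (Ioo (0:ℝ) 1) := by
  intro u hu v hv huv
  exact csInf_le_csInf (qset_bddBelow hF hu.1) (qset_nonempty hF hv.2)
    (fun x hx => le_trans huv hx)

/-- Equation eqdeltak of the paper: under rank invariance (`h0 = Q0(U)`,
`h1 = Q1(U)` with a common uniform rank `U`), the expected treatment effect
among bunchers, `E[(h0 - h1)·1{h1 ≤ k ≤ h0}]`, equals the integral of the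
quantile treatment effect `Q0(u) - Q1(u)` over `u ∈ (F0(k), F1(k))`;
consequently the buncher ATE `E[h0 - h1 | h1 ≤ k ≤ h0]` is that integral
divided by the bunching probability `B = F1(k) - F0(k)` whenever `B > 0`. -/
theorem stmt4 {Ω : Type*} [MeasurableSpace Ω] (μ : Measure Ω)
    [IsProbabilityMeasure μ]
    (U : Ω → ℝ) (hU : Measurable U)
    (hUnif : μ.map U = volume.restrict (Set.Ioo (0 : ℝ) 1))
    (F0 F1 : ℝ → ℝ) (hF0 : IsCDF F0) (hF1 : IsCDF F1)
    (hQle : ∀ u ∈ Set.Ioo (0 : ℝ) 1, quantile F1 u ≤ quantile F0 u)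
    (h0 h1 : Ω → ℝ)
    (hh0 : h0 = fun ω => quantile F0 (U ω))
    (hh1 : h1 = fun ω => quantile F1 (U ω))
    (k : ℝ) (hc0 : ContinuousAt F0 k) (hc1 : ContinuousAt F1 k) :
    (∫ ω, Set.indicator {ω | h1 ω ≤ k ∧ k ≤ h0 ω} (fun ω => h0 ω - h1 ω) ω ∂μ
        = ∫ u in (F0 k)..(F1 k), (quantile F0 u - quantile F1 u)) ∧
    (0 < F1 k - F0 k →
      (∫ ω in {ω | h1 ω ≤ k ∧ k ≤ h0 ω}, (h0 ω - h1 ω) ∂μ)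
          / (μ {ω | h1 ω ≤ k ∧ k ≤ h0 ω}).toReal
        = (1 / (F1 k - F0 k))
            * ∫ u in (F0 k)..(F1 k), (quantile F0 u - quantile F1 u)) := by
  subst hh0 hh1
  set Q0 := quantile F0 with hQ0def
  set Q1 := quantile F1 with hQ1def
  set a := F0 k with hadef
  set b := F1 k with hbdef
  set f : ℝ → ℝ := fun u => Q0 u - Q1 u with hfdef
  -- basic facts
  have ha0 : (0:ℝ) ≤ a := cdf_nonneg hF0 k
  have hb1 : b ≤ 1 := cdf_le_one hF1 k
  have hab : a ≤ b := by
    by_contra h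
    push_neg at h
    set u := (a + b) / 2 with hudef
    have hbu : b < u := by rw [hudef]; linarith
    have hua : u < a := by rw [hudef]; linarith
    have hu : u ∈ Set.Ioo (0:ℝ) 1 :=
      ⟨lt_of_le_of_lt (cdf_nonneg hF1 k) hbu, lt_of_lt_of_le hua (cdf_le_one hF0 k)⟩
    have h1 : Q0 u ≤ k := (quantile_le_iff hF0 hu).2 hua.le
    have h2 : ¬ Q1 u ≤ k := fun hc => absurd ((quantile_le_iff hF1 hu).1 hc) (not_le.2 hbu)
    exact h2 ((hQle u hu).trans h1 |>.trans (le_of_eq rfl)) -- Q1 u ≤ Q0 u ≤ k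
  have hIooSub : Set.Ioo a b ⊆ Set.Ioo (0:ℝ) 1 :=
    fun u hu => ⟨lt_of_le_of_lt ha0 hu.1, lt_of_lt_of_le hu.2 hb1⟩
  -- pointwise characterization
  have hiff : ∀ u ∈ Set.Ioo (0:ℝ) 1, u ≠ a → u ≠ b →
      ((Q1 u ≤ k ∧ k ≤ Q0 u) ↔ u ∈ Set.Ioo a b) := by
    intro u hu hua hub
    constructor
    · rintro ⟨huk1, huk0⟩
      have h1 : u ≤ b := (quantile_le_iff hF1 hu).1 huk1
      have h2 : a ≤ u := by
        by_contra hc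
        push_neg at hc
        exact absurd (quantile_lt_of_lt_cdf hF0 hu.1 hc0 hc) (not_lt.2 huk0)
      exact ⟨h2.lt_of_ne (Ne.symm hua), h1.lt_of_ne hub⟩
    · rintro ⟨hau, hub'⟩
      refine ⟨(quantile_le_iff hF1 hu).2 hub'.le, ?_⟩
      by_contra hc
      push_neg at hc
      exact absurd (le_cdf_of_quantile_lt hF0 hu hc) (not_le.2 hau)
  -- almost everywhere, U lands in (0,1) \ {a, b}
  have hNmeas : MeasurableSet (Set.Ioo (0:ℝ) 1 \ {a, b}) :=
    measurableSet_Ioo.diff (Set.Finite.measurableSet (Set.toFinite _))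
  have hN : ∀ᵐ ω ∂μ, U ω ∈ Set.Ioo (0:ℝ) 1 ∧ U ω ≠ a ∧ U ω ≠ b := by
    have hz : μ (U ⁻¹' (Set.Ioo (0:ℝ) 1 \ {a, b})ᶜ) = 0 := by
      rw [← Measure.map_apply hU hNmeas.compl, hUnif,
        Measure.restrict_apply hNmeas.compl]
      refine measure_mono_null (fun u hu => ?_) (Set.Countable.measure_zero
        ((Set.toFinite ({a, b} : Set ℝ)).countable) volume)
      rcases hu with ⟨hu1, hu2⟩
      by_contra hc
      exact hu1 ⟨hu2, hc⟩
    refine (ae_iff).2 (measure_mono_null (fun ω hω => ?_) hz)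
    simp only [Set.mem_setOf_eq, not_and_or, not_not] at hω
    simp only [Set.mem_preimage, Set.mem_compl_iff, Set.mem_diff, not_and_or, not_not,
      Set.mem_insert_iff, Set.mem_singleton_iff]
    tauto
  -- measurability of f on (0,1)
  have hfm : AEMeasurable f (volume.restrict (Set.Ioo (0:ℝ) 1)) :=
    (aemeasurable_restrict_of_monotoneOn measurableSet_Ioo (quantile_monoOn hF0)).sub
      (aemeasurable_restrict_of_monotoneOn measurableSet_Ioo (quantile_monoOn hF1))
  set g2 : ℝ → ℝ := (Set.Ioo a b).indicator f with hg2def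
  have hg2m : AEStronglyMeasurable g2 (μ.map U) := by
    rw [hUnif]
    exact (hfm.indicator measurableSet_Ioo).aestronglyMeasurable
  -- the main integrand identity
  have hind : (fun ω => Set.indicator {ω | Q1 (U ω) ≤ k ∧ k ≤ Q0 (U ω)}
      (fun ω => Q0 (U ω) - Q1 (U ω)) ω) =ᵐ[μ] (fun ω => g2 (U ω)) := by
    filter_upwards [hN] with ω ⟨hω1, hω2, hω3⟩
    simp only [hg2def]
    by_cases hm : U ω ∈ Set.Ioo a b
    · rw [Set.indicator_of_mem hm,
        Set.indicator_of_mem (show ω ∈ {ω | Q1 (U ω) ≤ k ∧ k ≤ Q0 (U ω)} from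
          (hiff _ hω1 hω2 hω3).2 hm)]
    · rw [Set.indicator_of_notMem hm,
        Set.indicator_of_notMem (show ω ∉ {ω | Q1 (U ω) ≤ k ∧ k ≤ Q0 (U ω)} from
          fun hc => hm ((hiff _ hω1 hω2 hω3).1 hc))]
  -- compute the integral
  have hIoo_inter : Set.Ioo a b ∩ Set.Ioo (0:ℝ) 1 = Set.Ioo a b :=
    Set.inter_eq_self_of_subset_left hIooSub
  have hmain : (∫ ω, Set.indicator {ω | Q1 (U ω) ≤ k ∧ k ≤ Q0 (U ω)}
      (fun ω => Q0 (U ω) - Q1 (U ω)) ω ∂μ) = ∫ u in a..b, f u := by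
    rw [integral_congr_ae hind, ← integral_map hU.aemeasurable hg2m, hUnif, hg2def,
      integral_indicator measurableSet_Ioo, Measure.restrict_restrict measurableSet_Ioo,
      hIoo_inter, intervalIntegral.integral_of_le hab,
      ← MeasureTheory.integral_Ioc_eq_integral_Ioo]
  constructor
  · exact hmain
  · intro hB
    -- the bunching set is a.e. equal to U ⁻¹' (Ioo a b)
    have hAA' : {ω | Q1 (U ω) ≤ k ∧ k ≤ Q0 (U ω)} =ᵐ[μ] U ⁻¹' (Set.Ioo a b) := by
      rw [Filter.eventuallyEq_set]
      filter_upwards [hN] with ω ⟨hω1, hω2, hω3⟩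
      simpa using hiff _ hω1 hω2 hω3
    have hA'meas : MeasurableSet (U ⁻¹' (Set.Ioo a b)) := hU measurableSet_Ioo
    have hmeasA : (μ {ω | Q1 (U ω) ≤ k ∧ k ≤ Q0 (U ω)}).toReal = b - a := by
      rw [measure_congr hAA', ← Measure.map_apply hU measurableSet_Ioo, hUnif,
        Measure.restrict_apply measurableSet_Ioo, hIoo_inter, Real.volume_Ioo,
        ENNReal.toReal_ofReal (sub_nonneg.2 hab)]
    have hnum : (∫ ω in {ω | Q1 (U ω) ≤ k ∧ k ≤ Q0 (U ω)}, (Q0 (U ω) - Q1 (U ω)) ∂μ)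
        = ∫ u in a..b, f u := by
      rw [Measure.restrict_congr_set hAA', ← integral_indicator hA'meas]
      rw [← hmain]
      refine integral_congr_ae ?_
      have h1 : Set.indicator (U ⁻¹' (Set.Ioo a b)) (fun ω => Q0 (U ω) - Q1 (U ω))
          =ᵐ[μ] Set.indicator {ω | Q1 (U ω) ≤ k ∧ k ≤ Q0 (U ω)}
            (fun ω => Q0 (U ω) - Q1 (U ω)) := by
        filter_upwards [Filter.eventuallyEq_set.1 hAA'] with ω hω
        by_cases hm : ω ∈ {ω | Q1 (U ω) ≤ k ∧ k ≤ Q0 (U ω)}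
        · rw [Set.indicator_of_mem hm, Set.indicator_of_mem (hω.1 hm)]
        · rw [Set.indicator_of_notMem hm, Set.indicator_of_notMem (fun hc => hm (hω.2 hc))]
      exact h1
    rw [hnum, hmeasA, one_div, div_eq_mul_inv, mul_comm]
end

section
/- Let F be a cumulative distribution function that is differentiable at k with F(k) = a ∈ (0,1) and F'(k) = b > 0, and suppose ln F is concave on the set {x : F(x) > 0}. Then for every u ∈ (0,1), the quantile function satisfies Q(u) ≥ k + (a/b)·ln(u/a). -/
/-- Log-concavity quantile bound: if the CDF `F` is differentiable at `k` with
`F k = a ∈ (0,1)` and `F' k = b > 0`, and `ln F` is concave on `{F > 0}`, then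
`Q(u) ≥ k + (a/b)·ln(u/a)` for every `u ∈ (0,1)`. -/
theorem stmt5 (F : ℝ → ℝ) (hcdf : IsCDF F) (k a b : ℝ)
    (ha : a ∈ Set.Ioo (0 : ℝ) 1) (hb : 0 < b)
    (hFk : F k = a) (hderiv : HasDerivAt F b k)
    (hlc : ConcaveOn ℝ {x | 0 < F x} (fun x => Real.log (F x))) :
    ∀ u ∈ Set.Ioo (0 : ℝ) 1, k + (a / b) * Real.log (u / a) ≤ quantile F u := by
  intro u hu
  obtain ⟨hu0, hu1⟩ := hu
  obtain ⟨ha0, ha1⟩ := ha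
  set g : ℝ → ℝ := fun x => Real.log (F x) with hg
  have hFkpos : 0 < F k := by rw [hFk]; exact ha0
  have hgd : HasDerivAt g (b / a) k := by
    have := hderiv.log (ne_of_gt hFkpos)
    rwa [hFk] at this
  have hkS : k ∈ {x | 0 < F x} := hFkpos
  -- tangent line bound
  have tangent : ∀ y ∈ {x | 0 < F x}, g y ≤ g k + (b / a) * (y - k) := by
    intro y hy
    rcases lt_trichotomy y k with h | h | h
    · have hs := hlc.le_slope_of_hasDerivWithinAt_Iio hy hkS h hgd.hasDerivWithinAt
      rw [slope_def_field] at hs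
      have hk : 0 < k - y := by linarith
      rw [le_div_iff₀ hk] at hs
      nlinarith
    · simp [h]
    · have hs := hlc.slope_le_of_hasDerivAt hkS hy h hgd
      rw [slope_def_field] at hs
      have hk : 0 < y - k := by linarith
      rw [div_le_iff₀ hk] at hs
      nlinarith
  -- every x in the set satisfies the bound
  have hbound : ∀ x ∈ {x | u ≤ F x}, k + (a / b) * Real.log (u / a) ≤ x := by
    intro x hx
    have hFx : 0 < F x := lt_of_lt_of_le hu0 hx
    have h1 : Real.log u ≤ g x := Real.log_le_log hu0 hx
    have h2 : g x ≤ g k + (b / a) * (x - k) := tangent x hFx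
    have hgk : g k = Real.log a := by rw [hg]; simp [hFk]
    have hlog : Real.log (u / a) = Real.log u - Real.log a :=
      Real.log_div (ne_of_gt hu0) (ne_of_gt ha0)
    rw [hlog]
    have h3 : Real.log u - Real.log a ≤ (b / a) * (x - k) := by
      rw [hgk] at h2; linarith
    have hab : 0 < a / b := div_pos ha0 hb
    have := mul_le_mul_of_nonneg_left h3 (le_of_lt hab)
    have heq : a / b * (b / a * (x - k)) = x - k := by
      field_simp
    rw [heq] at this
    linarith
  -- nonemptiness
  have hne : {x | u ≤ F x}.Nonempty := by
    have : ∀ᶠ x in Filter.atTop, u < F x :=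
      hcdf.2.2.2.eventually_const_lt hu1
    obtain ⟨x, hx⟩ := this.exists
    exact ⟨x, le_of_lt hx⟩
  exact le_csInf hne hbound
end

section
/- Let F be a cumulative distribution function that is differentiable at k with F(k) = a ∈ (0,1) and F'(k) = b > 0, and suppose ln(1 − F) is concave on the set {x : F(x) < 1}. Then for every u ∈ (0,1), the quantile function satisfies Q(u) ≤ k − ((1−a)/b)·ln((1−u)/(1−a)). -/
/-- Survival log-concavity quantile bound: if the CDF `F` is differentiable at
`k` with `F k = a ∈ (0,1)` and `F' k = b > 0`, and `ln(1 - F)` is concave on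
`{F < 1}`, then `Q(u) ≤ k - ((1-a)/b)·ln((1-u)/(1-a))` for every `u ∈ (0,1)`. -/
theorem stmt6 (F : ℝ → ℝ) (hcdf : IsCDF F) (k a b : ℝ)
    (ha : a ∈ Set.Ioo (0 : ℝ) 1) (hb : 0 < b)
    (hFk : F k = a) (hderiv : HasDerivAt F b k)
    (hlc : ConcaveOn ℝ {x | F x < 1} (fun x => Real.log (1 - F x))) :
    ∀ u ∈ Set.Ioo (0 : ℝ) 1,
      quantile F u ≤ k - ((1 - a) / b) * Real.log ((1 - u) / (1 - a)) := by
  rintro u ⟨hu0, hu1⟩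
  have ha1 : (0:ℝ) < 1 - a := by linarith [ha.2]
  have hu1' : (0:ℝ) < 1 - u := by linarith
  set L : ℝ := Real.log ((1 - u) / (1 - a)) with hL
  set x₀ : ℝ := k - ((1 - a) / b) * L with hx₀
  -- key: F x₀ ≥ u
  have hmem : u ≤ F x₀ := by
    by_cases hS : F x₀ < 1
    · -- x₀ ∈ S, use tangent bound
      have hkS : F k < 1 := by rw [hFk]; exact ha.2
      have hgk : HasDerivAt (fun x => Real.log (1 - F x)) (-b / (1 - a)) k := by
        have h1 : HasDerivAt (fun x => 1 - F x) (-b) k := hderiv.const_sub 1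
        have := h1.log (by rw [hFk]; positivity)
        simpa [hFk] using this
      set g : ℝ → ℝ := fun x => Real.log (1 - F x) with hg
      have hkey : g x₀ ≤ g k + (-b / (1 - a)) * (x₀ - k) := by
        rcases lt_trichotomy x₀ k with h | h | h
        · have := hlc.le_slope_of_hasDerivAt hS hkS h hgk
          rw [slope_def_field] at this
          have hk0 : (0:ℝ) < k - x₀ := by linarith
          rw [le_div_iff₀ hk0] at this
          nlinarith [this]
        · simp [h]
        · have := hlc.slope_le_of_hasDerivAt hkS hS h hgk
          rw [slope_def_field] at this
          have hk0 : (0:ℝ) < x₀ - k := by linarith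
          rw [div_le_iff₀ hk0] at this
          nlinarith [this]
      have hRHS : g k + (-b / (1 - a)) * (x₀ - k) = Real.log (1 - u) := by
        have : g k = Real.log (1 - a) := by simp [hg, hFk]
        rw [this, hx₀]
        have hbne : b ≠ 0 := ne_of_gt hb
        have hane : (1 - a) ≠ 0 := ne_of_gt ha1
        have h1 : (-b / (1 - a)) * ((k - (1 - a) / b * L) - k) = L := by
          field_simp
          ring
        rw [h1, hL, Real.log_div (ne_of_gt hu1') hane]
        ring
      rw [hRHS] at hkey
      have hpos : (0:ℝ) < 1 - F x₀ := by linarith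
      have : 1 - F x₀ ≤ 1 - u := by
        have := Real.exp_le_exp.mpr hkey
        rwa [Real.exp_log hpos, Real.exp_log hu1'] at this
      linarith
    · push_neg at hS; linarith
  -- quantile bound via csInf
  have hbdd : BddBelow {x | u ≤ F x} := by
    obtain ⟨y, hy⟩ := (hcdf.2.2.1.eventually (gt_mem_nhds hu0)).exists
    refine ⟨y, fun x hx => ?_⟩
    by_contra h
    push_neg at h
    exact absurd (le_trans hx (hcdf.1 h.le)) (not_le.mpr hy)
  exact csInf_le hbdd hmem
end

section
/- Let F be a cumulative distribution function that is differentiable at k with F(k) = a ∈ (0,1) and F'(k) = b > 0, suppose ln F is concave on {x : F(x) > 0}, and let x ∈ (0, 1 − a). Then (1/x)·∫_a^{a+x} Q(u) du ≥ k + g(a, b, x), where Q is the quantile function of F. -/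
/-- The function `g(a,b,x) = (a/(b·x))·(a+x)·ln(1 + x/a) - a/b` from the
paper's Theorem 1. -/
noncomputable def g (a b x : ℝ) : ℝ :=
  a / (b * x) * (a + x) * Real.log (1 + x / a) - a / b

/-!
Log-concavity puts `log F` below its tangent at `k`: `log F z ≤ log a + (b / a) (z - k)`.
Every `z` with `u ≤ F z` therefore satisfies `z ≥ k + (a / b) log (u / a)`, and this lower
bound passes to the infimum `Q u`. Integrating it over `[a, a + x]` with `∫ log = t log t - t`
gives exactly `x (k + g a b x)`.
-/

open Set Real intervalIntegral

lemma ConcaveOn.le_tangent_of_hasDerivAt {S : Set ℝ} {f : ℝ → ℝ} {f' k z : ℝ}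
    (hf : ConcaveOn ℝ S f) (hk : k ∈ S) (hz : z ∈ S) (hf' : HasDerivAt f f' k) :
    f z ≤ f k + f' * (z - k) := by
  rcases lt_trichotomy z k with hzk | rfl | hkz
  · have h := hf.le_slope_of_hasDerivAt hz hk hzk hf'
    rw [slope_def_field, le_div_iff₀ (sub_pos.2 hzk)] at h
    linarith
  · simp
  · have h := hf.slope_le_of_hasDerivAt hk hz hkz hf'
    rw [slope_def_field, div_le_iff₀ (sub_pos.2 hkz)] at h
    linarith

namespace IsCDF

variable {F : ℝ → ℝ}

lemma bddBelow_setOf_le (hF : IsCDF F) {u : ℝ} (hu : 0 < u) : BddBelow {x | u ≤ F x} := by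
  obtain ⟨M, hM⟩ := Filter.eventually_atBot.1 (hF.2.2.1.eventually (eventually_lt_nhds hu))
  exact ⟨M, fun z hz => le_of_not_gt fun hzM => (hM z hzM.le).not_ge hz⟩

lemma nonempty_setOf_le (hF : IsCDF F) {u : ℝ} (hu : u < 1) : {x | u ≤ F x}.Nonempty :=
  (hF.2.2.2.eventually (eventually_ge_nhds hu)).exists

lemma monotoneOn_quantile (hF : IsCDF F) : MonotoneOn (quantile F) (Ioo 0 1) :=
  fun _ hu _ hv huv => csInf_le_csInf (hF.bddBelow_setOf_le hu.1) (hF.nonempty_setOf_le hv.2)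
    fun _ hz => huv.trans hz

lemma add_mul_log_div_le_quantile (hF : IsCDF F)
    (hlc : ConcaveOn ℝ {x | 0 < F x} (fun x => log (F x))) {k a b : ℝ} (ha : 0 < a)
    (hb : 0 < b) (hFk : F k = a) (hderiv : HasDerivAt F b k) {u : ℝ} (hu : u ∈ Ioo 0 1) :
    k + a / b * log (u / a) ≤ quantile F u := by
  refine le_csInf (hF.nonempty_setOf_le hu.2) fun z hz => ?_
  have hlog_deriv : HasDerivAt (fun x => log (F x)) (b / a) k := by
    simpa only [hFk] using hderiv.log (hFk ▸ ha.ne')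
  have htangent : log (F z) ≤ log a + b / a * (z - k) := by
    simpa only [hFk] using hlc.le_tangent_of_hasDerivAt (show 0 < F k from hFk ▸ ha)
      (show 0 < F z from hu.1.trans_le hz) hlog_deriv
  have hlog_u : log (u / a) ≤ b / a * (z - k) := by
    rw [log_div hu.1.ne' ha.ne']
    linarith [log_le_log hu.1 hz]
  calc k + a / b * log (u / a) ≤ k + a / b * (b / a * (z - k)) := by gcongr
    _ = z := by field_simp; ring

end IsCDF

lemma intervalIntegrable_log_div {a : ℝ} (ha : a ≠ 0) (s t : ℝ) :
    IntervalIntegrable (fun u => log (u / a)) MeasureTheory.volume s t := by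
  convert (intervalIntegrable_log' (a := s / a) (b := t / a)).comp_mul_right (c := a⁻¹) using 1
  · simp only [div_eq_mul_inv]
  all_goals field_simp

lemma integral_add_mul_log_div {k c a x : ℝ} (ha : a ≠ 0) :
    ∫ u in a..a + x, (k + c * log (u / a)) = x * k + c * ((a + x) * log (1 + x / a) - x) := by
  rw [integral_add intervalIntegrable_const ((intervalIntegrable_log_div ha _ _).const_mul c),
    integral_const_mul, integral_comp_div _ ha, integral_log]
  simp only [integral_const, smul_eq_mul, div_self ha, log_one]
  field_simp
  ring

/-- Integrated log-concavity bound (building block for the lower bound of the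
paper's Theorem 1): if `F k = a ∈ (0,1)`, `F' k = b > 0` and `ln F` is concave
on `{F > 0}`, then for `x ∈ (0, 1-a)` the average of the quantile function over
`[a, a+x]` is at least `k + g(a,b,x)`. -/
theorem stmt7 (F : ℝ → ℝ) (hcdf : IsCDF F) (k a b : ℝ)
    (ha : a ∈ Set.Ioo (0 : ℝ) 1) (hb : 0 < b)
    (hFk : F k = a) (hderiv : HasDerivAt F b k)
    (hlc : ConcaveOn ℝ {x | 0 < F x} (fun x => Real.log (F x)))
    (x : ℝ) (hx : x ∈ Set.Ioo 0 (1 - a)) :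
    k + g a b x ≤ (1 / x) * ∫ u in a..(a + x), quantile F u := by
  obtain ⟨hx0, hxa⟩ := hx
  have hax : a ≤ a + x := by linarith
  have hsub : uIcc a (a + x) ⊆ Ioo 0 1 := by
    rw [uIcc_of_le hax]
    exact fun u hu => ⟨ha.1.trans_le hu.1, by linarith [hu.2]⟩
  have hg : k + g a b x = 1 / x * ∫ u in a..a + x, (k + a / b * log (u / a)) := by
    rw [integral_add_mul_log_div ha.1.ne', g]
    field_simp
  rw [hg]
  refine mul_le_mul_of_nonneg_left (integral_mono_on hax ?_ ?_ fun u hu => ?_) (by positivity)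
  · exact intervalIntegrable_const.add ((intervalIntegrable_log_div ha.1.ne' _ _).const_mul _)
  · exact (hcdf.monotoneOn_quantile.mono hsub).intervalIntegrable
  · exact hcdf.add_mul_log_div_le_quantile hlc ha.1 hb hFk hderiv (hsub (Icc_subset_uIcc hu))
end

section
/- Let F be a cumulative distribution function that is differentiable at k with F(k) = a ∈ (0,1) and F'(k) = b > 0, suppose ln(1 − F) is concave on {x : F(x) < 1}, and let x ∈ (0, 1 − a). Then (1/x)·∫_a^{a+x} Q(u) du ≤ k − g(1 − a, b, −x), where Q is the quantile function of F. -/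
/-!
Concavity of `t ↦ log (1 - F t)` puts it below its tangent line at `k`, whose slope is
`-b / (1 - a)`; hence `1 - F t ≤ (1 - a) * exp (-(b / (1 - a)) * (t - k))` for `t ≥ k`.
Inverting this tail bound gives `Q u ≤ k - (1 - a) / b * log ((1 - u) / (1 - a))` for
`a ≤ u < 1`, and the right-hand side integrates in closed form over `[a, a + x]`
(after `u ↦ (1 - u) / (1 - a)` it is `∫ log`) to `x * (k - g (1 - a) b (-x))`.
-/

open Real Set Filter Topology MeasureTheory

lemma bddBelow_setOf_le_of_tendsto_atBot {F : ℝ → ℝ} {l u : ℝ} (hmono : Monotone F)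
    (hF : Tendsto F atBot (𝓝 l)) (hu : l < u) : BddBelow {x | u ≤ F x} := by
  obtain ⟨y, hy⟩ := (hF.eventually (eventually_lt_nhds hu)).exists
  exact ⟨y, fun z hz => le_of_not_gt fun hzy => (hz.trans (hmono hzy.le)).not_gt hy⟩

lemma nonempty_setOf_le_of_tendsto_atTop {F : ℝ → ℝ} {l u : ℝ}
    (hF : Tendsto F atTop (𝓝 l)) (hu : u < l) : {x | u ≤ F x}.Nonempty :=
  let ⟨y, hy⟩ := (hF.eventually (eventually_gt_nhds hu)).exists
  ⟨y, hy.le⟩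

lemma quantile_le_of_le_apply {F : ℝ → ℝ} (hmono : Monotone F)
    (hbot : Tendsto F atBot (𝓝 0)) {u t : ℝ} (hu : 0 < u) (ht : u ≤ F t) :
    quantile F u ≤ t :=
  csInf_le (bddBelow_setOf_le_of_tendsto_atBot hmono hbot hu) ht

lemma monotoneOn_quantile {F : ℝ → ℝ} (hmono : Monotone F) (hbot : Tendsto F atBot (𝓝 0))
    (htop : Tendsto F atTop (𝓝 1)) : MonotoneOn (quantile F) (Ioo 0 1) :=
  fun _ hu _ hv huv => csInf_le_csInf (bddBelow_setOf_le_of_tendsto_atBot hmono hbot hu.1)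
    (nonempty_setOf_le_of_tendsto_atTop htop hv.2) fun _ hz => huv.trans hz

lemma one_sub_le_mul_exp_of_concaveOn_log_one_sub {F : ℝ → ℝ} {k a b : ℝ} (ha : a < 1)
    (hFk : F k = a) (hderiv : HasDerivAt F b k)
    (hlc : ConcaveOn ℝ {x | F x < 1} (fun x => log (1 - F x))) {t : ℝ} (hkt : k ≤ t) :
    1 - F t ≤ (1 - a) * exp (-(b / (1 - a)) * (t - k)) := by
  have hc : 0 < 1 - a := sub_pos.2 ha
  rcases le_or_gt 1 (F t) with hFt | hFt
  · nlinarith [exp_pos (-(b / (1 - a)) * (t - k))]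
  rcases hkt.eq_or_lt with rfl | hkt
  · simp [hFk]
  have hder : HasDerivAt (fun x => log (1 - F x)) (-(b / (1 - a))) k := by
    simpa [hFk, neg_div] using (hderiv.const_sub 1).log (by rw [hFk]; exact hc.ne')
  have hslope := hlc.slope_le_of_hasDerivAt (by simpa [hFk]) hFt hkt hder
  rw [slope_def_field, div_le_iff₀ (sub_pos.2 hkt), hFk] at hslope
  calc 1 - F t ≤ exp (log (1 - a) + -(b / (1 - a)) * (t - k)) :=
        (log_le_iff_le_exp (sub_pos.2 hFt)).1 (by linarith)
    _ = (1 - a) * exp (-(b / (1 - a)) * (t - k)) := by rw [exp_add, exp_log hc]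

lemma quantile_le_sub_mul_log_of_concaveOn {F : ℝ → ℝ} (hmono : Monotone F)
    (hbot : Tendsto F atBot (𝓝 0)) {k a b : ℝ} (ha0 : 0 < a) (ha1 : a < 1) (hb : 0 < b)
    (hFk : F k = a) (hderiv : HasDerivAt F b k)
    (hlc : ConcaveOn ℝ {x | F x < 1} (fun x => log (1 - F x))) {u : ℝ} (hau : a ≤ u)
    (hu1 : u < 1) :
    quantile F u ≤ k - (1 - a) / b * log ((1 - u) / (1 - a)) := by
  have hc : 0 < 1 - a := sub_pos.2 ha1
  have hr : 0 < (1 - u) / (1 - a) := div_pos (sub_pos.2 hu1) hc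
  have hlog : log ((1 - u) / (1 - a)) ≤ 0 :=
    log_nonpos hr.le ((div_le_one hc).2 (by linarith))
  have hkt : k ≤ k - (1 - a) / b * log ((1 - u) / (1 - a)) := by
    have := mul_nonpos_of_nonneg_of_nonpos (div_pos hc hb).le hlog
    linarith
  refine quantile_le_of_le_apply hmono hbot (ha0.trans_le hau) ?_
  have htail := one_sub_le_mul_exp_of_concaveOn_log_one_sub ha1 hFk hderiv hlc hkt
  have hexponent : -(b / (1 - a)) * (k - (1 - a) / b * log ((1 - u) / (1 - a)) - k) =
      log ((1 - u) / (1 - a)) := by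
    field_simp
    ring
  rw [hexponent, exp_log hr, mul_div_cancel₀ _ hc.ne'] at htail
  linarith

lemma intervalIntegrable_log_one_sub_div {a c : ℝ} (ha : a < 1) (hc : c < 1) :
    IntervalIntegrable (fun u => log ((1 - u) / (1 - a))) volume a c := by
  refine ContinuousOn.intervalIntegrable (ContinuousOn.log (by fun_prop) fun u hu => ?_)
  have hu1 : u < 1 := hu.2.trans_lt (max_lt ha hc)
  exact div_ne_zero (sub_ne_zero.2 hu1.ne') (sub_ne_zero.2 ha.ne')

lemma integral_log_one_sub_div {a : ℝ} (ha : a ≠ 1) (x : ℝ) :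
    ∫ u in a..a + x, log ((1 - u) / (1 - a)) =
      -((1 - a - x) * log ((1 - a - x) / (1 - a))) - x := by
  have hc : 1 - a ≠ 0 := sub_ne_zero.2 ha.symm
  simp_rw [sub_div (1 : ℝ)]
  rw [intervalIntegral.integral_comp_sub_div (fun y => log y) hc, integral_log]
  have h1 : 1 / (1 - a) - a / (1 - a) = 1 := by field_simp
  have h2 : 1 / (1 - a) - (a + x) / (1 - a) = (1 - a - x) / (1 - a) := by field_simp; ring
  rw [h1, h2, log_one, smul_eq_mul]
  field_simp
  ring

lemma integral_sub_mul_log_one_sub_div {k a b x : ℝ} (hb : b ≠ 0) (hx0 : 0 < x)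
    (hxa : x < 1 - a) :
    ∫ u in a..a + x, (k - (1 - a) / b * log ((1 - u) / (1 - a))) =
      x * (k - g (1 - a) b (-x)) := by
  have hc : 1 - a ≠ 0 := by linarith
  have hlog := intervalIntegrable_log_one_sub_div (a := a) (c := a + x) (by linarith) (by linarith)
  rw [intervalIntegral.integral_sub intervalIntegrable_const (hlog.const_mul _),
    intervalIntegral.integral_const_mul, integral_log_one_sub_div (by linarith),
    intervalIntegral.integral_const, g]
  have : 1 + -x / (1 - a) = (1 - a - x) / (1 - a) := by field_simp; ring
  rw [this, smul_eq_mul]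
  field_simp
  ring

/-- Integrated survival-log-concavity bound (building block for the upper bound
of the paper's Theorem 1): if `F k = a ∈ (0,1)`, `F' k = b > 0` and `ln(1 - F)`
is concave on `{F < 1}`, then for `x ∈ (0, 1-a)` the average of the quantile
function over `[a, a+x]` is at most `k - g(1-a, b, -x)`. -/
theorem stmt8 (F : ℝ → ℝ) (hcdf : IsCDF F) (k a b : ℝ)
    (ha : a ∈ Set.Ioo (0 : ℝ) 1) (hb : 0 < b)
    (hFk : F k = a) (hderiv : HasDerivAt F b k)
    (hlc : ConcaveOn ℝ {x | F x < 1} (fun x => Real.log (1 - F x)))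
    (x : ℝ) (hx : x ∈ Set.Ioo 0 (1 - a)) :
    (1 / x) * ∫ u in a..(a + x), quantile F u ≤ k - g (1 - a) b (-x) := by
  obtain ⟨ha0, ha1⟩ := ha
  obtain ⟨hx0, hxa⟩ := hx
  obtain ⟨hmono, -, hbot, htop⟩ := hcdf
  have hle : a ≤ a + x := by linarith
  have hsub : uIcc a (a + x) ⊆ Ioo 0 1 := by
    rw [uIcc_of_le hle]
    exact fun u hu => ⟨by linarith [hu.1], by linarith [hu.2]⟩
  have hQ : IntervalIntegrable (quantile F) volume a (a + x) :=
    ((monotoneOn_quantile hmono hbot htop).mono hsub).intervalIntegrable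
  have hbound : IntervalIntegrable (fun u => k - (1 - a) / b * log ((1 - u) / (1 - a)))
      volume a (a + x) :=
    intervalIntegrable_const.sub
      ((intervalIntegrable_log_one_sub_div ha1 (by linarith)).const_mul _)
  have hint := intervalIntegral.integral_mono_on hle hQ hbound fun u hu =>
    quantile_le_sub_mul_log_of_concaveOn hmono hbot ha0 ha1 hb hFk hderiv hlc hu.1
      (hsub (Icc_subset_uIcc hu)).2
  rw [integral_sub_mul_log_one_sub_div hb.ne' hx0 hxa] at hint
  calc (1 / x) * ∫ u in a..(a + x), quantile F u ≤ (1 / x) * (x * (k - g (1 - a) b (-x))) :=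
        mul_le_mul_of_nonneg_left hint (by positivity)
    _ = k - g (1 - a) b (-x) := by field_simp
end

section
/- Let h0 and h1 be integrable real random variables with h1 ≤ h0 almost surely, and define m(s) := E[min(h0, max(h1, s))] for s ∈ ℝ. If P(h0 = k) = 0 and P(h1 = k) = 0, then m is differentiable at k with m'(k) = P(h1 ≤ k ≤ h0). -/
/-!
For each outcome, `s ↦ min (h0 ω) (max (h1 ω) s)` is 1-Lipschitz, and at `k` it is locally
constant unless `h1 ω < k < h0 ω`, where it is locally the identity; so off the null events
`h0 = k`, `h1 = k` its derivative at `k` is the indicator of `h1 ω ≤ k ≤ h0 ω`. Differentiating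
under the integral sign (dominated by the constant 1) gives the bunching probability.
-/

open MeasureTheory Set Filter

theorem hasDerivAt_min_max {a b k : ℝ} (ha : a ≠ k) (hb : b ≠ k) :
    HasDerivAt (fun s => min a (max b s)) ((Icc b a).indicator 1 k) k := by
  rcases hb.symm.lt_or_gt with hkb | hbk
  · rw [indicator_of_notMem fun h => hkb.not_ge h.1]
    refine (hasDerivAt_const k (min a b)).congr_of_eventuallyEq ?_
    filter_upwards [Iio_mem_nhds hkb] with s hs
    rw [max_eq_left hs.le]
  rcases ha.lt_or_gt with hak | hka
  · rw [indicator_of_notMem fun h => hak.not_ge h.2]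
    refine (hasDerivAt_const k a).congr_of_eventuallyEq ?_
    filter_upwards [Ioi_mem_nhds hak] with s hs
    rw [min_eq_left (hs.le.trans (le_max_right b s))]
  · rw [indicator_of_mem (mem_Icc.2 ⟨hbk.le, hka.le⟩), Pi.one_apply]
    refine (hasDerivAt_id k).congr_of_eventuallyEq ?_
    filter_upwards [Ioo_mem_nhds hbk hka] with s hs
    rw [max_eq_right hs.1.le, min_eq_right hs.2.le, id]

theorem hasDerivAt_integral_min_max {Ω : Type*} [MeasurableSpace Ω] {μ : Measure Ω}
    [IsFiniteMeasure μ] {f g : Ω → ℝ} (hf : Integrable f μ) (hg : Integrable g μ) {k : ℝ}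
    (hfk : μ {ω | f ω = k} = 0) (hgk : μ {ω | g ω = k} = 0) :
    HasDerivAt (fun s => ∫ ω, min (f ω) (max (g ω) s) ∂μ)
      (μ.real {ω | g ω ≤ k ∧ k ≤ f ω}) k := by
  set S := {ω | g ω ≤ k ∧ k ≤ f ω}
  have hS : NullMeasurableSet S μ :=
    (nullMeasurableSet_le hg.aemeasurable aemeasurable_const).inter
      (nullMeasurableSet_le aemeasurable_const hf.aemeasurable)
  have hF_meas (s : ℝ) : AEStronglyMeasurable (fun ω => min (f ω) (max (g ω) s)) μ :=
    hf.aestronglyMeasurable.inf (hg.aestronglyMeasurable.sup aestronglyMeasurable_const)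
  have hF_int : Integrable (fun ω => min (f ω) (max (g ω) k)) μ :=
    hf.inf (hg.sup (integrable_const k))
  have h_lip (ω : Ω) :
      LipschitzOnWith (Real.nnabs 1) (fun s => min (f ω) (max (g ω) s)) univ := by
    rw [map_one, lipschitzOnWith_univ]
    exact (LipschitzWith.id.const_max (g ω)).const_min (f ω)
  have h_diff : ∀ᵐ ω ∂μ, HasDerivAt (fun s => min (f ω) (max (g ω) s)) (S.indicator 1 ω) k := by
    filter_upwards [measure_eq_zero_iff_ae_notMem.1 hfk, measure_eq_zero_iff_ae_notMem.1 hgk]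
      with ω hfω hgω
    exact hasDerivAt_min_max hfω hgω
  have := (hasDerivAt_integral_of_dominated_loc_of_lip univ_mem (.of_forall hF_meas) hF_int
    (aestronglyMeasurable_one.indicator₀ hS) (ae_of_all _ h_lip) (integrable_const 1) h_diff).2
  rwa [integral_indicator₀ hS, Pi.one_def, setIntegral_const, smul_eq_mul, mul_one] at this

theorem stmt14_general {Ω : Type*} [MeasurableSpace Ω] (μ : Measure Ω)
    [IsProbabilityMeasure μ]
    (h0 h1 : Ω → ℝ)
    (hi0 : Integrable h0 μ) (hi1 : Integrable h1 μ)
    (k : ℝ)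
    (hk0 : μ {ω | h0 ω = k} = 0) (hk1 : μ {ω | h1 ω = k} = 0)
    (m : ℝ → ℝ) (hm : m = fun s => ∫ ω, min (h0 ω) (max (h1 ω) s) ∂μ) :
    HasDerivAt m ((μ {ω | h1 ω ≤ k ∧ k ≤ h0 ω}).toReal) k := by
  subst hm
  exact hasDerivAt_integral_min_max hi0 hi1 hk0 hk1

/-- Item 2 of the paper's Theorem 2 (marginal version): with `h1 ≤ h0` a.s. and
`m(s) = E[min(h0, max(h1, s))]` the average observed hours when the kink is at
`s`, if `P(h0 = k) = P(h1 = k) = 0` then `m` is differentiable at `k` with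
derivative equal to the bunching probability `P(h1 ≤ k ≤ h0)`. -/
theorem stmt14 {Ω : Type*} [MeasurableSpace Ω] (μ : Measure Ω)
    [IsProbabilityMeasure μ]
    (h0 h1 : Ω → ℝ) (hm0 : Measurable h0) (hm1 : Measurable h1)
    (hi0 : Integrable h0 μ) (hi1 : Integrable h1 μ)
    (hle : ∀ᵐ ω ∂μ, h1 ω ≤ h0 ω) (k : ℝ)
    (hk0 : μ {ω | h0 ω = k} = 0) (hk1 : μ {ω | h1 ω = k} = 0)
    (m : ℝ → ℝ) (hm : m = fun s => ∫ ω, min (h0 ω) (max (h1 ω) s) ∂μ) :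
    HasDerivAt m ((μ {ω | h1 ω ≤ k ∧ k ≤ h0 ω}).toReal) k :=
  stmt14_general μ h0 h1 hi0 hi1 k hk0 hk1 m hm
end
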